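/- Suppose there exist binary linear codes with parameters [n,k,d_1] and [n,k,d_2]. Then (a) there exists a binary LCP of codes with parameters [n+1,k,d_1,d_2], and (b) there exists a binary LCP of codes (C_1,C_2) of length n with dim C_1 = k, dim C_2 = n−k, C_1 + C_2 = F_2^n, the minimum distance of C_1 at least d_1 − 1, and the minimum distance of C_2^⊥ at least d_2 − 1. -/

import Mathlib

open scoped BigOperators

/-- The Euclidean dual of a linear code `C ⊆ F^ι`. -/
def dualCode {F : Type*} [Field F] {ι : Type*} [Fintype ι]
    (C : Submodule F (ι → F)) : Submodule F (ι → F) where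
  carrier := {b | ∀ c ∈ C, ∑ i, b i * c i = 0}
  zero_mem' := by intro c hc; simp
  add_mem' := by
    intro x y hx hy c hc
    simp only [Set.mem_setOf_eq, Pi.add_apply, add_mul, Finset.sum_add_distrib,
      hx c hc, hy c hc, add_zero]
  smul_mem' := by
    intro r x hx c hc
    simp only [Set.mem_setOf_eq, Pi.smul_apply, smul_eq_mul, mul_assoc,
      ← Finset.mul_sum, hx c hc, mul_zero]

/-- The (linear) code `C` has minimum distance `d`. -/
def hasMinDist {F : Type*} [Field F] [DecidableEq F] {ι : Type*} [Fintype ι]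
    (C : Submodule F (ι → F)) (d : ℕ) : Prop :=
  (∃ c ∈ C, c ≠ 0 ∧ hammingNorm c = d) ∧ ∀ c ∈ C, c ≠ 0 → d ≤ hammingNorm c

/-!
Extend `D₁` and `D₂` by a zero coordinate to codes `A` and `B` of length `n + 1`, and choose a
coordinate permutation `σ` minimising `dim (A ∩ (σB)^⊥)`. Since `dim A = dim σB`, this dimension
equals `dim (σB ∩ A^⊥)`. If both intersections were nonzero, pick nonzero `x` and `y` in them;
thanks to the zero coordinate neither is constant, so some transposition `(i j)` has `x i ≠ x j`
and `y i ≠ y j`, and composing `σ` with it strictly lowers the dimension. Hence `A ∩ (σB)^⊥ = 0`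
and `(A, (σB)^⊥)` is an LCP, which is (a). Since `A` vanishes on the last coordinate, deleting
that coordinate keeps `D₁` complementary to the punctured `σB`, whose minimum distance drops by
at most one: this is (b).
-/

open Module

section Duality

variable {F ι : Type*} [Field F] [Fintype ι]

theorem mem_dualCode {C : Submodule F (ι → F)} {b : ι → F} :
    b ∈ dualCode C ↔ ∀ c ∈ C, b ⬝ᵥ c = 0 :=
  Iff.rfl

theorem finrank_add_finrank_dualCode (C : Submodule F (ι → F)) :
    finrank F C + finrank F (dualCode C) = Fintype.card ι := by
  classical
  have : dualCode C = C.dualAnnihilator.comap (dotProductEquiv F ι).toLinearMap := by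
    ext b
    simp [mem_dualCode, Submodule.mem_dualAnnihilator]
  rw [this, Submodule.comap_equiv_eq_map_symm, LinearEquiv.finrank_map_eq,
    Subspace.finrank_add_finrank_dualAnnihilator_eq, finrank_fintype_fun_eq_card]

theorem finrank_dualCode (C : Submodule F (ι → F)) :
    finrank F (dualCode C) = Fintype.card ι - finrank F C := by
  have := finrank_add_finrank_dualCode C
  omega

theorem le_dualCode_dualCode (C : Submodule F (ι → F)) : C ≤ dualCode (dualCode C) :=
  fun c hc b hb => (dotProduct_comm c b).trans (hb c hc)

theorem dualCode_dualCode (C : Submodule F (ι → F)) : dualCode (dualCode C) = C := by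
  refine (Submodule.eq_of_le_of_finrank_le (le_dualCode_dualCode C) ?_).symm
  have h₁ := finrank_add_finrank_dualCode C
  have h₂ := finrank_add_finrank_dualCode (dualCode C)
  omega

theorem dualCode_sup (P Q : Submodule F (ι → F)) :
    dualCode (P ⊔ Q) = dualCode P ⊓ dualCode Q := by
  ext b
  simp only [Submodule.mem_inf, mem_dualCode]
  refine ⟨fun h => ⟨fun c hc => h c (Submodule.mem_sup_left hc),
    fun c hc => h c (Submodule.mem_sup_right hc)⟩, ?_⟩
  rintro ⟨hP, hQ⟩ c hc
  obtain ⟨p, hp, q, hq, rfl⟩ := Submodule.mem_sup.mp hc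
  rw [dotProduct_add, hP p hp, hQ q hq, add_zero]

theorem finrank_inf_dualCode_add_finrank (A B : Submodule F (ι → F)) :
    finrank F ↥(A ⊓ dualCode B) + finrank F B = finrank F ↥(B ⊓ dualCode A) + finrank F A := by
  have h₁ := Submodule.finrank_sup_add_finrank_inf_eq A (dualCode B)
  have h₂ := finrank_add_finrank_dualCode (A ⊔ dualCode B)
  have h₃ := finrank_add_finrank_dualCode B
  rw [dualCode_sup, dualCode_dualCode, inf_comm] at h₂
  omega

theorem finrank_le_finrank_of_inf_dualCode_eq_bot {A B : Submodule F (ι → F)}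
    (h : A ⊓ dualCode B = ⊥) : finrank F A ≤ finrank F B := by
  have := finrank_inf_dualCode_add_finrank A B
  rw [h, finrank_bot] at this
  omega

theorem sup_dualCode_eq_top {A B : Submodule F (ι → F)} (hAB : finrank F A = finrank F B)
    (h : A ⊓ dualCode B = ⊥) : A ⊔ dualCode B = ⊤ := by
  apply Submodule.eq_top_of_finrank_eq
  have h₁ := Submodule.finrank_sup_add_finrank_inf_eq A (dualCode B)
  have h₂ := finrank_add_finrank_dualCode B
  rw [h, finrank_bot] at h₁
  rw [finrank_fintype_fun_eq_card]
  omega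

end Duality

theorem comp_swap_eq_add_smul {ι R : Type*} [DecidableEq ι] [Ring R] (c : ι → R) (i j : ι) :
    c ∘ Equiv.swap i j = c + (c j - c i) • (Pi.single i 1 - Pi.single j 1) := by
  ext k
  rcases eq_or_ne k i with rfl | hki
  · rcases eq_or_ne k j with rfl | hkj <;> simp [*]
  · rcases eq_or_ne k j with rfl | hkj
    · simp [hki]
    · simp [hki, hkj, Equiv.swap_apply_of_ne_of_ne]

theorem dotProduct_comp_swap {ι R : Type*} [Fintype ι] [DecidableEq ι] [CommRing R]
    (a c : ι → R) (i j : ι) :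
    a ⬝ᵥ (c ∘ Equiv.swap i j) = a ⬝ᵥ c - (a i - a j) * (c i - c j) := by
  rw [comp_swap_eq_add_smul, dotProduct_add, dotProduct_smul, dotProduct_sub,
    dotProduct_single, dotProduct_single, smul_eq_mul]
  ring

theorem hammingNorm_comp_equiv {ι κ β : Type*} [Fintype ι] [Fintype κ] [Zero β] [DecidableEq β]
    (x : ι → β) (σ : κ ≃ ι) : hammingNorm (x ∘ σ) = hammingNorm x :=
  Finset.card_equiv σ (by simp)

theorem hammingNorm_snoc {n : ℕ} {β : Type*} [Zero β] [DecidableEq β] (x : Fin n → β) (a : β) :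
    hammingNorm (Fin.snoc x a : Fin (n + 1) → β) = hammingNorm x + if a ≠ 0 then 1 else 0 := by
  simp [hammingNorm, Finset.card_filter, Fin.sum_univ_castSucc]

theorem finrank_map_funLeft_perm {F ι : Type*} [Field F] (σ : Equiv.Perm ι)
    (C : Submodule F (ι → F)) : finrank F (C.map (LinearMap.funLeft F F σ)) = finrank F C :=
  LinearEquiv.finrank_map_eq (LinearEquiv.funCongrLeft F F σ) C

theorem exists_ne_and_ne {ι α β : Type*} {x : ι → α} {y : ι → β}
    (hx : ∃ i j, x i ≠ x j) (hy : ∃ i j, y i ≠ y j) : ∃ i j, x i ≠ x j ∧ y i ≠ y j := by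
  by_contra! h
  obtain ⟨a, b, hab⟩ := hy
  obtain ⟨c, d, hcd⟩ := hx
  have hxab : x a = x b := by_contra fun hne => hab (h a b hne)
  obtain ⟨e, he⟩ : ∃ e, x e ≠ x a := by
    by_contra! hc
    exact hcd ((hc c).trans (hc d).symm)
  exact hab ((h e a he).symm.trans (h e b (hxab ▸ he)))

section Permutation

variable {F ι : Type*} [Field F] [Fintype ι] [DecidableEq ι]

theorem eq_and_mem_dualCode_of_mem_dualCode_map_swap {A B : Submodule F (ι → F)} {i j : ι}
    {a y : ι → F} (ha : a ∈ A ⊓ dualCode (B.map (LinearMap.funLeft F F (Equiv.swap i j))))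
    (hy : y ∈ B ⊓ dualCode A) (hyij : y i ≠ y j) : a i = a j ∧ a ∈ dualCode B := by
  have hswap : ∀ c ∈ B, a ⬝ᵥ c - (a i - a j) * (c i - c j) = 0 := fun c hc => by
    rw [← dotProduct_comp_swap]
    exact ha.2 _ (Submodule.mem_map_of_mem hc)
  have hay : a ⬝ᵥ y = 0 := (dotProduct_comm a y).trans (hy.2 a ha.1)
  have haij : a i = a j := by
    have := hswap y hy.1
    rw [hay, zero_sub, neg_eq_zero, mul_eq_zero, sub_eq_zero, sub_eq_zero] at this
    exact this.resolve_right hyij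
  exact ⟨haij, mem_dualCode.mpr fun c hc => by simpa [haij] using hswap c hc⟩

theorem finrank_inf_dualCode_map_swap_lt {A B : Submodule F (ι → F)} {i j : ι} {x y : ι → F}
    (hx : x ∈ A ⊓ dualCode B) (hy : y ∈ B ⊓ dualCode A) (hxij : x i ≠ x j) (hyij : y i ≠ y j) :
    finrank F ↥(A ⊓ dualCode (B.map (LinearMap.funLeft F F (Equiv.swap i j)))) <
      finrank F ↥(A ⊓ dualCode B) := by
  refine Submodule.finrank_lt_finrank_of_lt (SetLike.lt_iff_le_and_exists.mpr ⟨?_, x, hx, ?_⟩)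
  · exact fun a ha => ⟨ha.1, (eq_and_mem_dualCode_of_mem_dualCode_map_swap ha hy hyij).2⟩
  · exact fun hx' => hxij (eq_and_mem_dualCode_of_mem_dualCode_map_swap hx' hy hyij).1

theorem exists_perm_inf_dualCode_map_eq_bot {A B : Submodule F (ι → F)}
    (hAB : finrank F A = finrank F B) (hA : ∀ x ∈ A, x ≠ 0 → ∃ i j, x i ≠ x j)
    (hB : ∀ y ∈ B, y ≠ 0 → ∃ i j, y i ≠ y j) :
    ∃ σ : Equiv.Perm ι, A ⊓ dualCode (B.map (LinearMap.funLeft F F σ)) = ⊥ := by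
  obtain ⟨σ, -, hmin⟩ := Finset.exists_min_image Finset.univ
    (fun σ : Equiv.Perm ι => finrank F ↥(A ⊓ dualCode (B.map (LinearMap.funLeft F F σ))))
    ⟨1, Finset.mem_univ _⟩
  refine ⟨σ, ?_⟩
  set Bσ := B.map (LinearMap.funLeft F F σ)
  by_contra hne
  obtain ⟨x, hx, hx0⟩ := (Submodule.ne_bot_iff _).mp hne
  have hne' : Bσ ⊓ dualCode A ≠ ⊥ := by
    intro hbot
    have := finrank_inf_dualCode_add_finrank A Bσ
    rw [hbot, finrank_bot, finrank_map_funLeft_perm, ← hAB, zero_add, add_eq_right,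
      Submodule.finrank_eq_zero] at this
    exact hne this
  obtain ⟨y, hy, hy0⟩ := (Submodule.ne_bot_iff _).mp hne'
  have hyσ : ∃ i j, y i ≠ y j := by
    obtain ⟨b, hb, rfl⟩ := Submodule.mem_map.mp hy.1
    obtain ⟨i, j, hij⟩ := hB b hb (by rintro rfl; simp at hy0)
    exact ⟨σ.symm i, σ.symm j, by simpa using hij⟩
  obtain ⟨i, j, hxij, hyij⟩ := exists_ne_and_ne (hA x hx.1 hx0) hyσ
  have hlt := finrank_inf_dualCode_map_swap_lt hx hy hxij hyij
  rw [← Submodule.map_comp, ← LinearMap.funLeft_comp, ← Equiv.coe_trans] at hlt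
  exact hlt.not_ge (hmin _ (Finset.mem_univ _))

end Permutation

theorem hasMinDist.map {F ι κ : Type*} [Field F] [DecidableEq F] [Fintype ι] [Fintype κ]
    {C : Submodule F (ι → F)} {d : ℕ} {f : (ι → F) →ₗ[F] κ → F}
    (hf : ∀ x, hammingNorm (f x) = hammingNorm x) (h : hasMinDist C d) :
    hasMinDist (C.map f) d := by
  have hf0 (x) : f x = 0 ↔ x = 0 := by rw [← hammingNorm_eq_zero, hf, hammingNorm_eq_zero]
  obtain ⟨⟨c, hc, hc0, hcd⟩, hle⟩ := h
  refine ⟨⟨f c, Submodule.mem_map_of_mem hc, (hf0 c).not.mpr hc0, (hf c).trans hcd⟩, ?_⟩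
  rintro _ ⟨x, hx, rfl⟩ hx0
  exact (hf x).symm ▸ hle x hx ((hf0 x).not.mp hx0)

section Puncturing

variable {F : Type*} [Field F] {n : ℕ}

def appendZero : (Fin n → F) →ₗ[F] Fin (n + 1) → F where
  toFun x := Fin.snoc x 0
  map_add' x y := by ext i; refine Fin.lastCases ?_ (fun i => ?_) i <;> simp
  map_smul' r x := by ext i; refine Fin.lastCases ?_ (fun i => ?_) i <;> simp

theorem appendZero_apply (x : Fin n → F) : appendZero x = Fin.snoc x 0 := rfl

theorem appendZero_dotProduct (x : Fin n → F) (v : Fin (n + 1) → F) :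
    appendZero x ⬝ᵥ v = x ⬝ᵥ (v ∘ Fin.castSucc) := by
  simp [dotProduct, appendZero_apply, Fin.sum_univ_castSucc]

theorem hammingNorm_appendZero [DecidableEq F] (x : Fin n → F) :
    hammingNorm (appendZero x) = hammingNorm x := by
  simp [appendZero_apply, hammingNorm_snoc]

theorem hammingNorm_le_hammingNorm_comp_castSucc_add_one [DecidableEq F] (v : Fin (n + 1) → F) :
    hammingNorm v ≤ hammingNorm (v ∘ Fin.castSucc) + 1 := by
  have h := hammingNorm_snoc (Fin.init v) (v (Fin.last n))
  rw [Fin.snoc_init_self] at h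
  rw [h]
  exact Nat.add_le_add_left (by split_ifs <;> omega) _

theorem appendZero_injective : Function.Injective (appendZero : (Fin n → F) →ₗ[F] _) :=
  fun x y h => funext fun i => by simpa [appendZero_apply] using congrFun h i.castSucc

theorem finrank_map_appendZero (D : Submodule F (Fin n → F)) :
    finrank F (D.map appendZero) = finrank F D :=
  (LinearEquiv.finrank_eq (Submodule.equivMapOfInjective _ appendZero_injective D)).symm

theorem exists_perm_inf_dualCode_map_appendZero_eq_bot {D₁ D₂ : Submodule F (Fin n → F)}
    (h : finrank F D₁ = finrank F D₂) :
    ∃ σ : Equiv.Perm (Fin (n + 1)),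
      D₁.map appendZero ⊓ dualCode ((D₂.map appendZero).map (LinearMap.funLeft F F σ)) = ⊥ := by
  have hnonconst (D : Submodule F (Fin n → F)) :
      ∀ x ∈ D.map appendZero, x ≠ 0 → ∃ i j, x i ≠ x j := by
    rintro _ ⟨x, -, rfl⟩ hx0
    have hx : x ≠ 0 := by rintro rfl; exact hx0 (map_zero _)
    obtain ⟨i, hi⟩ := Function.ne_iff.mp hx
    exact ⟨i.castSucc, Fin.last n, by simpa [appendZero_apply] using hi⟩
  refine exists_perm_inf_dualCode_map_eq_bot ?_ (hnonconst D₁) (hnonconst D₂)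
  rw [finrank_map_appendZero, finrank_map_appendZero, h]

theorem inf_dualCode_map_funLeft_castSucc_eq_bot {D : Submodule F (Fin n → F)}
    {B : Submodule F (Fin (n + 1) → F)} (h : D.map appendZero ⊓ dualCode B = ⊥) :
    D ⊓ dualCode (B.map (LinearMap.funLeft F F Fin.castSucc)) = ⊥ := by
  rw [Submodule.eq_bot_iff] at h ⊢
  rintro x ⟨hxD, hx⟩
  refine appendZero_injective ((h _ ⟨Submodule.mem_map_of_mem hxD, fun b hb => ?_⟩).trans
    (map_zero _).symm)
  exact (appendZero_dotProduct x b).trans (hx _ (Submodule.mem_map_of_mem hb))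

theorem sub_one_le_hammingNorm_of_mem_map_funLeft_castSucc [DecidableEq F]
    {B : Submodule F (Fin (n + 1) → F)} {d : ℕ} (hB : ∀ b ∈ B, b ≠ 0 → d ≤ hammingNorm b) :
    ∀ c ∈ B.map (LinearMap.funLeft F F Fin.castSucc), c ≠ 0 → d - 1 ≤ hammingNorm c := by
  rintro _ ⟨b, hb, rfl⟩ hc0
  have h₁ := hB b hb (by rintro rfl; exact hc0 (map_zero _))
  have h₂ := hammingNorm_le_hammingNorm_comp_castSucc_add_one b
  change d - 1 ≤ hammingNorm (b ∘ Fin.castSucc)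
  omega

end Puncturing

/-- If binary codes with parameters `[n,k,d₁]` and `[n,k,d₂]` exist, then
(a) there is a binary LCP of codes with parameters `[n+1,k,d₁,d₂]`, and
(b) there is a binary LCP of codes `(C₁,C₂)` of length `n` with `dim C₁ = k`,
`dim C₂ = n-k`, `C₁ + C₂ = F_2^n`, minimum distance of `C₁` at least `d₁ - 1` and
minimum distance of `C₂^⊥` at least `d₂ - 1`. -/
theorem exists_binary_lcp_of_codes {n k d₁ d₂ : ℕ}
    (D₁ D₂ : Submodule (ZMod 2) (Fin n → ZMod 2))
    (hD₁ : Module.finrank (ZMod 2) D₁ = k) (hD₂ : Module.finrank (ZMod 2) D₂ = k)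
    (hd₁ : hasMinDist D₁ d₁) (hd₂ : hasMinDist D₂ d₂) :
    (∃ C₁ C₂ : Submodule (ZMod 2) (Fin (n + 1) → ZMod 2),
      Module.finrank (ZMod 2) C₁ = k ∧ Module.finrank (ZMod 2) C₂ = n + 1 - k ∧
      C₁ ⊔ C₂ = ⊤ ∧ hasMinDist C₁ d₁ ∧ hasMinDist (dualCode C₂) d₂) ∧
    (∃ C₁ C₂ : Submodule (ZMod 2) (Fin n → ZMod 2),
      Module.finrank (ZMod 2) C₁ = k ∧ Module.finrank (ZMod 2) C₂ = n - k ∧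
      C₁ ⊔ C₂ = ⊤ ∧ (∀ c ∈ C₁, c ≠ 0 → d₁ - 1 ≤ hammingNorm c) ∧
      (∀ c ∈ dualCode C₂, c ≠ 0 → d₂ - 1 ≤ hammingNorm c)) := by
  obtain ⟨σ, hσ⟩ := exists_perm_inf_dualCode_map_appendZero_eq_bot (hD₁.trans hD₂.symm)
  set A := D₁.map appendZero
  set B := (D₂.map appendZero).map (LinearMap.funLeft (ZMod 2) (ZMod 2) σ)
  set P := B.map (LinearMap.funLeft (ZMod 2) (ZMod 2) Fin.castSucc)
  have hA : finrank (ZMod 2) A = k := (finrank_map_appendZero D₁).trans hD₁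
  have hB : finrank (ZMod 2) B = k := by
    rw [finrank_map_funLeft_perm, finrank_map_appendZero, hD₂]
  have hBd : hasMinDist B d₂ :=
    (hd₂.map hammingNorm_appendZero).map fun x => hammingNorm_comp_equiv x σ
  have hP : D₁ ⊓ dualCode P = ⊥ := inf_dualCode_map_funLeft_castSucc_eq_bot hσ
  have hPk : finrank (ZMod 2) P = k :=
    le_antisymm ((Submodule.finrank_map_le _ _).trans hB.le)
      (hD₁ ▸ finrank_le_finrank_of_inf_dualCode_eq_bot hP)
  refine ⟨⟨A, dualCode B, hA, ?_, sup_dualCode_eq_top (hA.trans hB.symm) hσ,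
      hd₁.map hammingNorm_appendZero, (dualCode_dualCode B).symm ▸ hBd⟩,
    ⟨D₁, dualCode P, hD₁, ?_, sup_dualCode_eq_top (hD₁.trans hPk.symm) hP,
      fun c hc hc0 => (Nat.sub_le _ _).trans (hd₁.2 c hc hc0), ?_⟩⟩
  · rw [finrank_dualCode, hB, Fintype.card_fin]
  · rw [finrank_dualCode, hPk, Fintype.card_fin]
  · rw [dualCode_dualCode]
    exact sub_one_le_hammingNorm_of_mem_map_funLeft_castSucc hBd.2
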